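/- arXiv:2007.09501 — 5 statements merged into one kernel-verified Lean document; each statement's English description precedes it below -/
import Mathlib

section
/- Let D = (I_r | M) be a standard representative matrix and D̂ = (−M^T | I_{n−r}). Then the integer row space of the full matrix 𝐃 = (D ; D̂) equals the direct sum im_Z(D^T) ⊕ ker_Z(D); in particular im_Z(D^T) ∩ ker_Z(D) = {0}. -/
open Matrix MeasureTheory
open scoped ENNReal

noncomputable section

/-- The standard representative matrix `D = (I_r | M)`. -/
def Dmat {r m : ℕ} (M : Matrix (Fin r) (Fin m) ℤ) : Matrix (Fin r) (Fin r ⊕ Fin m) ℤ :=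
  Matrix.fromCols 1 M

/-- The dual matrix `D̂ = (-Mᵀ | I_{n-r})`. -/
def Dhat {r m : ℕ} (M : Matrix (Fin r) (Fin m) ℤ) : Matrix (Fin m) (Fin r ⊕ Fin m) ℤ :=
  Matrix.fromCols (-Mᵀ) 1

/-- The full matrix `𝐃 = (I_r, M ; -Mᵀ, I_{n-r})`. -/
def Dfull {r m : ℕ} (M : Matrix (Fin r) (Fin m) ℤ) :
    Matrix (Fin r ⊕ Fin m) (Fin r ⊕ Fin m) ℤ :=
  Matrix.fromBlocks 1 M (-Mᵀ) 1

/-- Column `j` of `D`, as a real vector. -/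
def colD {r m : ℕ} (M : Matrix (Fin r) (Fin m) ℤ) (j : Fin r ⊕ Fin m) : Fin r → ℝ :=
  fun a => (Dmat M a j : ℝ)

/-- Column `j` of `D̂`, as a real vector. -/
def colDhat {r m : ℕ} (M : Matrix (Fin r) (Fin m) ℤ) (j : Fin r ⊕ Fin m) : Fin m → ℝ :=
  fun a => (Dhat M a j : ℝ)

/-- An order-respecting enumeration of the columns in `B` (via `finSumFinEquiv`). -/
def colEnum {r m : ℕ} (B : Finset (Fin r ⊕ Fin m))
    (h : (B.image finSumFinEquiv).card = r) : Fin r → Fin r ⊕ Fin m :=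
  fun i => finSumFinEquiv.symm ((B.image finSumFinEquiv).orderIsoOfFin h i)

/-- The multiplicity `m(B) = |det (D|_B)|` of an `r`-subset of columns. -/
def mult {r m : ℕ} (M : Matrix (Fin r) (Fin m) ℤ) (B : Finset (Fin r ⊕ Fin m)) : ℕ :=
  if h : (B.image finSumFinEquiv).card = r then
    ((Dmat M).submatrix id (colEnum B h)).det.natAbs
  else 0

/-- `B` is a basis of `D`: an `r`-subset of columns with nonzero determinant. -/
def IsBasis {r m : ℕ} (M : Matrix (Fin r) (Fin m) ℤ) (B : Finset (Fin r ⊕ Fin m)) : Prop :=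
  B.card = r ∧ mult M B ≠ 0

/-- Closed fundamental parallelepiped of the vectors `v i`, `i ∈ S`. -/
def PPc {ι κ : Type*} (v : ι → κ → ℝ) (S : Finset ι) : Set (κ → ℝ) :=
  {x | ∃ a : ι → ℝ, (∀ i ∈ S, 0 ≤ a i ∧ a i ≤ 1) ∧ x = ∑ i ∈ S, a i • v i}

/-- Open fundamental parallelepiped of the vectors `v i`, `i ∈ S`. -/
def PPo {ι κ : Type*} (v : ι → κ → ℝ) (S : Finset ι) : Set (κ → ℝ) :=
  {x | ∃ a : ι → ℝ, (∀ i ∈ S, 0 < a i ∧ a i < 1) ∧ x = ∑ i ∈ S, a i • v i}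

/-- The closed parallelepiped `P(B) = P₁(B) × P₂(B) ⊆ ℝⁿ`. -/
def Pclosed {r m : ℕ} (M : Matrix (Fin r) (Fin m) ℤ) (B : Finset (Fin r ⊕ Fin m)) :
    Set ((Fin r ⊕ Fin m) → ℝ) :=
  {x | (x ∘ Sum.inl) ∈ PPc (colD M) B ∧ (x ∘ Sum.inr) ∈ PPc (colDhat M) Bᶜ}

/-- The open parallelepiped `P(B)° = P₁(B)° × P₂(B)°`. -/
def Popen {r m : ℕ} (M : Matrix (Fin r) (Fin m) ℤ) (B : Finset (Fin r ⊕ Fin m)) :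
    Set ((Fin r ⊕ Fin m) → ℝ) :=
  {x | (x ∘ Sum.inl) ∈ PPo (colD M) B ∧ (x ∘ Sum.inr) ∈ PPo (colDhat M) Bᶜ}

/-- The tile `T(D) = ⋃_{B basis} P(B)`. -/
def Tile {r m : ℕ} (M : Matrix (Fin r) (Fin m) ℤ) : Set ((Fin r ⊕ Fin m) → ℝ) :=
  ⋃ B ∈ {B : Finset (Fin r ⊕ Fin m) | IsBasis M B}, Pclosed M B

/-- The lattice vector `𝐃ᵀ z ∈ ℝⁿ` for `z ∈ ℤⁿ`. -/
def latVec {r m : ℕ} (M : Matrix (Fin r) (Fin m) ℤ) (z : (Fin r ⊕ Fin m) → ℤ) :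
    (Fin r ⊕ Fin m) → ℝ :=
  fun j => ((Matrix.vecMul z (Dfull M)) j : ℝ)

/-- The integer lattice `im_ℤ(𝐃ᵀ)` spanned by the rows of `𝐃`. -/
def LatZ {r m : ℕ} (M : Matrix (Fin r) (Fin m) ℤ) : Submodule ℤ ((Fin r ⊕ Fin m) → ℤ) :=
  Submodule.span ℤ (Set.range fun i => Dfull M i)

/-- `w` is a shifting vector: it does not lie in the span of any facet of `P(B)`
for any basis `B` (split form: neither its first `r` coordinates lie in the span of a
facet of `P₁(B)` nor its last `n-r` coordinates in the span of a facet of `P₂(B)`). -/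
def IsShifting {r m : ℕ} (M : Matrix (Fin r) (Fin m) ℤ) (w : (Fin r ⊕ Fin m) → ℝ) : Prop :=
  ∀ B : Finset (Fin r ⊕ Fin m), IsBasis M B →
    (∀ j ∈ B, (w ∘ Sum.inl) ∉ Submodule.span ℝ (colD M '' ↑(B.erase j))) ∧
    (∀ j ∈ Bᶜ, (w ∘ Sum.inr) ∉ Submodule.span ℝ (colDhat M '' ↑(Bᶜ.erase j)))

/-- `x` is `w`-associated with `B`: `x + εw ∈ P(B)` for all sufficiently small `ε > 0`. -/
def WAssoc {r m : ℕ} (M : Matrix (Fin r) (Fin m) ℤ) (w : (Fin r ⊕ Fin m) → ℝ)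
    (x : (Fin r ⊕ Fin m) → ℝ) (B : Finset (Fin r ⊕ Fin m)) : Prop :=
  ∃ ε₀ > (0 : ℝ), ∀ ε : ℝ, 0 < ε → ε < ε₀ → x + ε • w ∈ Pclosed M B

end

/-! The kernel of `(I | M)` is exactly the row space of `(-Mᵀ | I)`: a vector `x` lies in it iff
`x_inl = -M x_inr`, i.e. iff `x = x_inr ᵥ* (-Mᵀ | I)`. Row space and kernel of a matrix over an
ordered ring meet trivially, since a vector in both is orthogonal to itself. -/

namespace Matrix

variable {R m n m₁ m₂ : Type*}

theorem span_range_row_fromRows [Semiring R] (A₁ : Matrix m₁ n R) (A₂ : Matrix m₂ n R) :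
    Submodule.span R (Set.range (fromRows A₁ A₂).row) =
      Submodule.span R (Set.range A₁.row) ⊔ Submodule.span R (Set.range A₂.row) := by
  rw [← Submodule.span_union, ← Set.Sum.elim_range]
  rfl

theorem span_range_row_inf_ker_mulVecLin_eq_bot [CommRing R] [LinearOrder R]
    [IsStrictOrderedRing R] [Fintype m] [Fintype n] (A : Matrix m n R) :
    Submodule.span R (Set.range A.row) ⊓ LinearMap.ker A.mulVecLin = ⊥ := by
  rw [eq_bot_iff]
  rintro x ⟨hrow, hker : A *ᵥ x = 0⟩
  obtain ⟨c, rfl⟩ : ∃ c, c ᵥ* A = x := by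
    rwa [← range_vecMulLinear, SetLike.mem_coe, LinearMap.mem_range] at hrow
  have hself : (c ᵥ* A) ⬝ᵥ (c ᵥ* A) = 0 := by
    rw [← dotProduct_mulVec, hker, dotProduct_zero]
  exact dotProduct_self_eq_zero.mp hself

variable [CommRing R] [Fintype m] [Fintype n] [DecidableEq m] [DecidableEq n]

theorem fromCols_one_mul_transpose_fromCols_neg_transpose_one (M : Matrix m n R) :
    fromCols (1 : Matrix m m R) M * (fromCols (-Mᵀ) (1 : Matrix n n R))ᵀ = 0 := by
  rw [transpose_fromCols, fromCols_mul_fromRows, transpose_neg, transpose_transpose,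
    transpose_one, Matrix.one_mul, Matrix.mul_one, neg_add_cancel]

theorem ker_mulVecLin_fromCols_one (M : Matrix m n R) :
    LinearMap.ker (fromCols 1 M).mulVecLin =
      Submodule.span R (Set.range (fromCols (-Mᵀ) 1).row) := by
  rw [← range_vecMulLinear]
  ext x
  simp only [LinearMap.mem_ker, LinearMap.mem_range, mulVecLin_apply, vecMulLinear_apply]
  constructor
  · intro hx
    refine ⟨x ∘ Sum.inr, ?_⟩
    rw [fromCols_mulVec, one_mulVec, add_eq_zero_iff_eq_neg] at hx
    rw [vecMul_fromCols, vecMul_neg, vecMul_transpose, vecMul_one, ← hx]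
    exact Sum.elim_comp_inl_inr x
  · rintro ⟨c, rfl⟩
    rw [← mulVec_transpose, mulVec_mulVec,
      fromCols_one_mul_transpose_fromCols_neg_transpose_one, zero_mulVec]

end Matrix

/-- the integer row space of the full matrix `𝐃` is the (internal direct)
sum of the integer row space of `D` and the integer kernel of `D`; in particular the
two summands intersect trivially. -/
theorem stmt3 {r m : ℕ} (M : Matrix (Fin r) (Fin m) ℤ) :
    Submodule.span ℤ (Set.range fun i => Dfull M i) =
      Submodule.span ℤ (Set.range fun i => Dmat M i) ⊔
        LinearMap.ker (Matrix.mulVecLin (Dmat M)) ∧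
    Submodule.span ℤ (Set.range fun i => Dmat M i) ⊓
        LinearMap.ker (Matrix.mulVecLin (Dmat M)) = ⊥ := by
  have hDfull : Dfull M = fromRows (Dmat M) (Dhat M) :=
    (fromRows_fromCols_eq_fromBlocks _ _ _ _).symm
  have hker : LinearMap.ker (Dmat M).mulVecLin = Submodule.span ℤ (Set.range (Dhat M).row) :=
    ker_mulVecLin_fromCols_one M
  refine ⟨?_, span_range_row_inf_ker_mulVecLin_eq_bot (Dmat M)⟩
  change Submodule.span ℤ (Set.range (Dfull M).row) =
    Submodule.span ℤ (Set.range (Dmat M).row) ⊔ _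
  rw [hDfull, span_range_row_fromRows, hker]
end

section
/- (Sandpile matrix-tree theorem) For a standard representative matrix D = (I_r | M), the order of the sandpile group S(D) = Z^n / im_Z(𝐃^T) equals the sum over all bases B of D of m(B)^2, where m(B) is the absolute value of the determinant of the r × r submatrix of D on the columns of B. Equivalently, det(I_r + M M^T) = Σ_{B} det(D|_B)^2, summed over all r-subsets B of columns. -/
open Matrix MeasureTheory
open scoped ENNReal

/-!
Cauchy–Binet applied to `D Dᵀ = I_r + M Mᵀ` gives the determinant identity. Taking the Schur
complement of the lower identity block, `det 𝐃 = det (I_r + M Mᵀ)`, which is nonzero because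
`I_r + M Mᵀ` is positive definite. The index in `ℤⁿ` of the lattice spanned by the rows of a
nonsingular integer matrix is the absolute value of its determinant (Smith normal form), so
`|S(D)| = det (I_r + M Mᵀ)` as well.
-/

open Finset Function Equiv

theorem Function.Injective.exists_perm_comp_eq {κ ι : Type*} {e p : κ → ι} (he : Injective e)
    (hp : Injective p) (h : Set.range p = Set.range e) : ∃ σ : Perm κ, e ∘ σ = p :=
  ⟨(Equiv.ofInjective p hp).trans ((Equiv.setCongr h).trans (Equiv.ofInjective e he).symm),
    funext fun k => by simp [Equiv.apply_ofInjective_symm]⟩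

namespace Matrix

section CauchyBinet

variable {R κ ι : Type*} [CommRing R] [Fintype κ] [DecidableEq κ] [Fintype ι]

theorem det_mul_eq_sum_det_submatrix_mul_prod (A : Matrix κ ι R) (B : Matrix ι κ R) :
    (A * B).det = ∑ p : κ → ι, (A.submatrix id p).det * ∏ k, B (p k) k := by
  simp only [det_apply', mul_apply, prod_univ_sum, mul_sum, Fintype.piFinset_univ,
    submatrix_apply, id, sum_mul, ← prod_mul_distrib, mul_assoc]
  exact sum_comm

variable [DecidableEq ι]

theorem sum_det_submatrix_mul_prod_image_eq (A : Matrix κ ι R) (B : Matrix ι κ R) {e : κ → ι}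
    (he : Injective e) :
    ∑ p ∈ univ.filter (fun p : κ → ι => univ.image p = univ.image e),
      (A.submatrix id p).det * ∏ k, B (p k) k =
      (A.submatrix id e).det * (B.submatrix e id).det := by
  have hfiber : univ.filter (fun p : κ → ι => univ.image p = univ.image e) =
      univ.image fun σ : Perm κ => e ∘ σ := by
    ext p
    simp only [mem_filter, mem_univ, true_and, mem_image]
    constructor
    · intro hp
      have hpinj : Injective p := by
        rw [← Set.injOn_univ, ← coe_univ, ← card_image_iff, hp, card_image_of_injective _ he]
      exact he.exists_perm_comp_eq hpinj (by simpa using congrArg ((↑) : Finset ι → Set ι) hp)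
    · rintro ⟨σ, rfl⟩
      rw [← image_image, image_univ_equiv]
  have hcomp : Injective fun σ : Perm κ => e ∘ σ :=
    fun σ τ h => Equiv.ext fun k => he (congrFun h k)
  rw [hfiber, sum_image hcomp.injOn, det_apply' (B.submatrix e id), mul_sum]
  refine sum_congr rfl fun σ _ => ?_
  rw [show A.submatrix id (e ∘ σ) = (A.submatrix id e).submatrix id σ from rfl, det_permute']
  simp only [submatrix_apply, comp_def, id]
  ring

theorem det_mul_eq_sum_powersetCard (A : Matrix κ ι R) (B : Matrix ι κ R)
    (e : Finset ι → κ → ι)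
    (he : ∀ S : Finset ι, S.card = Fintype.card κ → Injective (e S) ∧ univ.image (e S) = S) :
    (A * B).det = ∑ S ∈ powersetCard (Fintype.card κ) univ,
      (A.submatrix id (e S)).det * (B.submatrix (e S) id).det := by
  rw [det_mul_eq_sum_det_submatrix_mul_prod, ← sum_fiberwise univ fun p => univ.image p,
    ← sum_subset (subset_univ (powersetCard (Fintype.card κ) univ))]
  · refine sum_congr rfl fun S hS => ?_
    obtain ⟨hinj, himg⟩ := he S (mem_powersetCard.mp hS).2
    simpa only [himg] using sum_det_submatrix_mul_prod_image_eq A B hinj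
  · refine fun S _ hS => sum_eq_zero fun p hp => ?_
    have hp : univ.image p = S := (mem_filter.mp hp).2
    have hnotinj : ¬ Injective p := fun hinj => hS <| mem_powersetCard.mpr
      ⟨subset_univ _, by rw [← hp, card_image_of_injective _ hinj, card_univ]⟩
    obtain ⟨i, j, hij, hne⟩ := not_injective_iff.mp hnotinj
    rw [det_zero_of_column_eq hne fun a => by simp [hij], zero_mul]

theorem det_mul_transpose_eq_sum_sq (A : Matrix κ ι R) (e : Finset ι → κ → ι)
    (he : ∀ S : Finset ι, S.card = Fintype.card κ → Injective (e S) ∧ univ.image (e S) = S) :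
    (A * Aᵀ).det = ∑ S ∈ powersetCard (Fintype.card κ) univ, (A.submatrix id (e S)).det ^ 2 := by
  simp only [det_mul_eq_sum_powersetCard A Aᵀ e he, ← transpose_submatrix, det_transpose, sq]

end CauchyBinet

theorem natCard_quotient_span_rows {ι : Type*} [Fintype ι] [DecidableEq ι] (A : Matrix ι ι ℤ)
    (hA : A.det ≠ 0) :
    Nat.card ((ι → ℤ) ⧸ Submodule.span ℤ (Set.range fun i => A i)) = A.det.natAbs := by
  rw [← Submodule.natAbs_det_basis_change (Pi.basisFun ℤ ι) _
    (Module.Basis.span (linearIndependent_rows_of_det_ne_zero hA))]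
  simp only [Pi.basisFun_det_apply]
  congr 3
  ext i : 1
  simp

theorem det_one_add_mul_transpose_ne_zero {R ι κ : Type*} [Fintype ι] [DecidableEq ι]
    [Fintype κ] [CommRing R] [LinearOrder R] [IsStrictOrderedRing R] (M : Matrix ι κ R) :
    (1 + M * Mᵀ).det ≠ 0 := by
  intro h
  obtain ⟨v, hv0, hv⟩ := exists_mulVec_eq_zero_iff.mpr h
  have hsq : v ⬝ᵥ v + (v ᵥ* M) ⬝ᵥ (v ᵥ* M) = 0 := by
    simpa [add_mulVec, dotProduct_add, ← mulVec_mulVec, dotProduct_mulVec, mulVec_transpose]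
      using congrArg (v ⬝ᵥ ·) hv
  have hv : 0 ≤ v ⬝ᵥ v := sum_nonneg fun i _ => mul_self_nonneg (v i)
  have hvM : 0 ≤ (v ᵥ* M) ⬝ᵥ (v ᵥ* M) := sum_nonneg fun i _ => mul_self_nonneg _
  exact hv0 (dotProduct_self_eq_zero.mp (by linarith))

end Matrix

section Sandpile

variable {r m : ℕ}

theorem colEnum_injective (B : Finset (Fin r ⊕ Fin m)) (h : (B.image finSumFinEquiv).card = r) :
    Injective (colEnum B h) :=
  finSumFinEquiv.symm.injective.comp (Subtype.val_injective.comp (OrderIso.injective _))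

theorem image_colEnum (B : Finset (Fin r ⊕ Fin m)) (h : (B.image finSumFinEquiv).card = r) :
    univ.image (colEnum B h) = B := by
  apply coe_injective
  rw [coe_image, coe_univ, Set.image_univ]
  unfold colEnum
  simp only [coe_orderIsoOfFin_apply]
  rw [Set.range_comp' finSumFinEquiv.symm, range_orderEmbOfFin, coe_image, Equiv.symm_image_image]

theorem Dmat_mul_transpose (M : Matrix (Fin r) (Fin m) ℤ) : Dmat M * (Dmat M)ᵀ = 1 + M * Mᵀ := by
  rw [Dmat, transpose_fromCols, fromCols_mul_fromRows, transpose_one, Matrix.mul_one]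

theorem det_Dfull (M : Matrix (Fin r) (Fin m) ℤ) : (Dfull M).det = (1 + M * Mᵀ).det := by
  rw [Dfull, det_fromBlocks_one₂₂, Matrix.mul_neg, sub_neg_eq_add]

theorem det_one_add_mul_transpose_eq_sum_mult_sq (M : Matrix (Fin r) (Fin m) ℤ) :
    (1 + M * Mᵀ).det = ∑ B ∈ powersetCard r univ, (mult M B : ℤ) ^ 2 := by
  have hcard (B : Finset (Fin r ⊕ Fin m)) (hB : B.card = r) :
      (B.image finSumFinEquiv).card = r := by
    rwa [card_image_of_injective _ finSumFinEquiv.injective]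
  let e (B : Finset (Fin r ⊕ Fin m)) : Fin r → Fin r ⊕ Fin m :=
    if h : (B.image finSumFinEquiv).card = r then colEnum B h else Sum.inl
  have he (B : Finset (Fin r ⊕ Fin m)) (hB : B.card = r) : e B = colEnum B (hcard B hB) :=
    dif_pos _
  rw [← Dmat_mul_transpose, det_mul_transpose_eq_sum_sq (Dmat M) e, Fintype.card_fin]
  · refine sum_congr rfl fun B hB => ?_
    have hB : B.card = r := (mem_powersetCard.mp hB).2
    rw [mult, dif_pos (hcard B hB), he B hB, Int.natAbs_sq]
  · intro B hB
    rw [Fintype.card_fin] at hB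
    rw [he B hB]
    exact ⟨colEnum_injective B _, image_colEnum B _⟩

end Sandpile

/-- sandpile matrix-tree theorem: `|S(D)| = Σ_B m(B)²`, summed over all
`r`-subsets `B` of the columns (non-bases contribute `0`); equivalently
`det(I_r + M Mᵀ) = Σ_B det(D|_B)²`. -/
theorem stmt6 {r m : ℕ} (M : Matrix (Fin r) (Fin m) ℤ) :
    Nat.card (((Fin r ⊕ Fin m) → ℤ) ⧸ LatZ M) =
      ∑ B ∈ Finset.powersetCard r (Finset.univ : Finset (Fin r ⊕ Fin m)),
        (mult M B) ^ 2 ∧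
    ((1 : Matrix (Fin r) (Fin r) ℤ) + M * Mᵀ).det =
      ∑ B ∈ Finset.powersetCard r (Finset.univ : Finset (Fin r ⊕ Fin m)),
        ((mult M B : ℤ)) ^ 2 := by
  have hdet := det_one_add_mul_transpose_eq_sum_mult_sq M
  refine ⟨?_, hdet⟩
  have hne : (Dfull M).det ≠ 0 := det_Dfull M ▸ det_one_add_mul_transpose_ne_zero M
  rw [LatZ, natCard_quotient_span_rows _ hne, det_Dfull, hdet]
  simp only [← Nat.cast_pow, ← Nat.cast_sum, Int.natAbs_natCast]
end

section
/- Let D = (I_r | M) be a standard representative matrix and let B₁ ≠ B₂ be two bases of D. Then the open parallelepipeds P(B₁)° and P(B₂)° are disjoint, where P(B) ⊂ R^n is the product of the open fundamental parallelepiped of the columns of D indexed by B (in R^r) with the open fundamental parallelepiped of the columns of D̂ indexed by the complement of B (in R^{n−r}). -/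
open Matrix MeasureTheory
open scoped ENNReal

/-!
If `x` lies in both `P(B₁)°` and `P(B₂)°`, subtracting its two coefficient vectors (extended by
zero to all `n` columns) gives `u ∈ ker D` from the first `r` coordinates and `v ∈ ker D̂` from the
last `n - r`. Since `ker D = row space of D̂`, these kernels are orthogonal, so `u ⬝ v = 0`. On the
other hand all coefficients are positive, which forces `u k * v k ≤ 0` for every column `k`, with
strict inequality for `k ∈ B₁ ∆ B₂`; so `u ⬝ v < 0` as soon as `B₁ ≠ B₂`.
-/

theorem dotProduct_eq_zero_of_mulVec_fromCols_eq_zero {R r m : Type*} [CommRing R]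
    [Fintype r] [Fintype m] [DecidableEq r] [DecidableEq m] (M : Matrix r m R)
    {u v : r ⊕ m → R} (hu : fromCols 1 M *ᵥ u = 0) (hv : fromCols (-Mᵀ) 1 *ᵥ v = 0) :
    u ⬝ᵥ v = 0 := by
  rw [fromCols_mulVec, one_mulVec, add_eq_zero_iff_eq_neg] at hu
  rw [fromCols_mulVec, one_mulVec, neg_mulVec, neg_add_eq_zero] at hv
  rw [dotProduct, Fintype.sum_sum_type]
  change u ∘ Sum.inl ⬝ᵥ v ∘ Sum.inl + u ∘ Sum.inr ⬝ᵥ v ∘ Sum.inr = 0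
  rw [hu, ← hv, neg_dotProduct, dotProduct_comm, dotProduct_mulVec, mulVec_transpose,
    dotProduct_comm, neg_add_cancel]

theorem sum_smul_transpose_eq_mulVec_indicator {R ι κ : Type*} [CommSemiring R] [Fintype ι]
    (A : Matrix κ ι R) (S : Finset ι) (a : ι → R) :
    ∑ i ∈ S, a i • Aᵀ i = A *ᵥ (S : Set ι).indicator a := by
  ext k
  simp only [Finset.sum_apply, Pi.smul_apply, transpose_apply, smul_eq_mul, mulVec, dotProduct]
  rw [← Finset.sum_indicator_subset _ S.subset_univ]
  refine Finset.sum_congr rfl fun i _ => ?_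
  by_cases hi : i ∈ S <;> simp [hi, mul_comm]

section SignPattern

variable {ι : Type*} [DecidableEq ι] [Fintype ι] {S₁ S₂ : Finset ι} {a₁ a₂ b₁ b₂ : ι → ℝ}

theorem indicator_sub_mul_indicator_compl_sub_neg (ha₁ : ∀ i ∈ S₁, 0 < a₁ i)
    (ha₂ : ∀ i ∈ S₂, 0 < a₂ i) (hb₁ : ∀ i ∈ S₁ᶜ, 0 < b₁ i) (hb₂ : ∀ i ∈ S₂ᶜ, 0 < b₂ i) {k : ι}
    (hk : k ∈ symmDiff S₁ S₂) :
    ((S₁ : Set ι).indicator a₁ k - (S₂ : Set ι).indicator a₂ k) *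
      ((↑S₁ᶜ : Set ι).indicator b₁ k - (↑S₂ᶜ : Set ι).indicator b₂ k) < 0 := by
  rcases Finset.mem_symmDiff.mp hk with ⟨h₁, h₂⟩ | ⟨h₂, h₁⟩
  · have := mul_pos (ha₁ k h₁) (hb₂ k (Finset.mem_compl.mpr h₂))
    simp [h₁, h₂, this]
  · have := mul_pos (ha₂ k h₂) (hb₁ k (Finset.mem_compl.mpr h₁))
    simp [h₁, h₂, this]

theorem indicator_sub_mul_indicator_compl_sub_nonpos (ha₁ : ∀ i ∈ S₁, 0 < a₁ i)
    (ha₂ : ∀ i ∈ S₂, 0 < a₂ i) (hb₁ : ∀ i ∈ S₁ᶜ, 0 < b₁ i) (hb₂ : ∀ i ∈ S₂ᶜ, 0 < b₂ i) (k : ι) :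
    ((S₁ : Set ι).indicator a₁ k - (S₂ : Set ι).indicator a₂ k) *
      ((↑S₁ᶜ : Set ι).indicator b₁ k - (↑S₂ᶜ : Set ι).indicator b₂ k) ≤ 0 := by
  by_cases hk : k ∈ symmDiff S₁ S₂
  · exact (indicator_sub_mul_indicator_compl_sub_neg ha₁ ha₂ hb₁ hb₂ hk).le
  · rw [Finset.mem_symmDiff] at hk
    by_cases h₁ : k ∈ S₁ <;> by_cases h₂ : k ∈ S₂ <;> simp_all

theorem indicator_sub_dotProduct_indicator_compl_sub_neg (hne : S₁ ≠ S₂)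
    (ha₁ : ∀ i ∈ S₁, 0 < a₁ i) (ha₂ : ∀ i ∈ S₂, 0 < a₂ i) (hb₁ : ∀ i ∈ S₁ᶜ, 0 < b₁ i)
    (hb₂ : ∀ i ∈ S₂ᶜ, 0 < b₂ i) :
    ((S₁ : Set ι).indicator a₁ - (S₂ : Set ι).indicator a₂) ⬝ᵥ
      ((↑S₁ᶜ : Set ι).indicator b₁ - (↑S₂ᶜ : Set ι).indicator b₂) < 0 := by
  obtain ⟨k, hk⟩ := Finset.symmDiff_nonempty.mpr hne
  exact Finset.sum_neg'
    (fun i _ => indicator_sub_mul_indicator_compl_sub_nonpos ha₁ ha₂ hb₁ hb₂ i)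
    ⟨k, Finset.mem_univ k, indicator_sub_mul_indicator_compl_sub_neg ha₁ ha₂ hb₁ hb₂ hk⟩

end SignPattern

section Parallelepiped

variable {r m : ℕ} (M : Matrix (Fin r) (Fin m) ℤ) (S : Finset (Fin r ⊕ Fin m))
  (a : Fin r ⊕ Fin m → ℝ)

theorem sum_smul_colD_eq_mulVec_indicator :
    ∑ i ∈ S, a i • colD M i = fromCols 1 (M.map (↑)) *ᵥ (S : Set _).indicator a := by
  have hD : (Dmat M).map (Int.cast : ℤ → ℝ) = fromCols 1 (M.map (↑)) := by
    ext i (j | j) <;> simp [Dmat, one_apply]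
  rw [← hD]
  exact sum_smul_transpose_eq_mulVec_indicator _ S a

theorem sum_smul_colDhat_eq_mulVec_indicator :
    ∑ i ∈ S, a i • colDhat M i = fromCols (-(M.map (↑))ᵀ) 1 *ᵥ (S : Set _).indicator a := by
  have hD : (Dhat M).map (Int.cast : ℤ → ℝ) = fromCols (-(M.map (↑))ᵀ) 1 := by
    ext i (j | j) <;> simp [Dhat, one_apply]
  rw [← hD]
  exact sum_smul_transpose_eq_mulVec_indicator _ S a

end Parallelepiped

theorem stmt7_general {r m : ℕ} (M : Matrix (Fin r) (Fin m) ℤ)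
    (B₁ B₂ : Finset (Fin r ⊕ Fin m))
    (hne : B₁ ≠ B₂) :
    Popen M B₁ ∩ Popen M B₂ = ∅ := by
  refine Set.eq_empty_of_forall_notMem ?_
  rintro x ⟨⟨⟨a₁, ha₁, hx₁⟩, ⟨b₁, hb₁, hy₁⟩⟩, ⟨⟨a₂, ha₂, hx₂⟩, ⟨b₂, hb₂, hy₂⟩⟩⟩
  have hu : fromCols 1 (M.map (↑)) *ᵥ
      ((B₁ : Set _).indicator a₁ - (B₂ : Set _).indicator a₂) = 0 := by
    rw [mulVec_sub, ← sum_smul_colD_eq_mulVec_indicator, ← sum_smul_colD_eq_mulVec_indicator,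
      ← hx₁, ← hx₂, sub_self]
  have hv : fromCols (-(M.map (↑))ᵀ) 1 *ᵥ
      ((↑B₁ᶜ : Set _).indicator b₁ - (↑B₂ᶜ : Set _).indicator b₂) = 0 := by
    rw [mulVec_sub, ← sum_smul_colDhat_eq_mulVec_indicator,
      ← sum_smul_colDhat_eq_mulVec_indicator, ← hy₁, ← hy₂, sub_self]
  refine (indicator_sub_dotProduct_indicator_compl_sub_neg hne (fun i hi => (ha₁ i hi).1)
    (fun i hi => (ha₂ i hi).1) (fun i hi => (hb₁ i hi).1) (fun i hi => (hb₂ i hi).1)).ne ?_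
  exact dotProduct_eq_zero_of_mulVec_fromCols_eq_zero _ hu hv

/-- for distinct bases `B₁ ≠ B₂`, the open parallelepipeds `P(B₁)°` and
`P(B₂)°` are disjoint. -/
theorem stmt7 {r m : ℕ} (M : Matrix (Fin r) (Fin m) ℤ)
    (B₁ B₂ : Finset (Fin r ⊕ Fin m)) (h₁ : IsBasis M B₁) (h₂ : IsBasis M B₂)
    (hne : B₁ ≠ B₂) :
    Popen M B₁ ∩ Popen M B₂ = ∅ :=
  stmt7_general M B₁ B₂ hne
end

section
/- For a standard representative matrix D = (I_r | M) and any basis B, the absolute value of the determinant of D̂ restricted to the columns not in B equals the absolute value of the determinant of D restricted to the columns in B. -/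
/-! Append to `D` the rows of the identity indexed by the complement `B̂` of `B`; call the
resulting square matrix `Q`. Reordering the columns as `B, B̂` makes `Q` block triangular with
diagonal blocks `D|_B` and `I`, so `det Q = ± det D|_B`. Since the rows of `D` and `D̂` are
orthogonal, `Q 𝐃ᵀ` is block triangular with diagonal blocks `D Dᵀ = I + M Mᵀ` and `(D̂|_{B̂})ᵀ`,
while `det 𝐃 = det (I + Mᵀ M)`. These two determinants agree (Sylvester) and are positive, so
`det Q = det D̂|_{B̂}`. -/

open Matrix MeasureTheory
open scoped ENNReal

theorem Function.bijective_sumElim_of_range_eq_compl {α β γ : Type*} {f : α → γ} {g : β → γ}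
    (hf : f.Injective) (hg : g.Injective) (hfg : Set.range g = (Set.range f)ᶜ) :
    (Sum.elim f g).Bijective := by
  refine ⟨hf.sumElim hg fun a b hab => ?_, ?_⟩
  · have hb : g b ∈ (Set.range f)ᶜ := hfg ▸ Set.mem_range_self b
    exact hb ⟨a, hab⟩
  · rw [← Set.range_eq_univ, Set.Sum.elim_range, hfg, Set.union_compl_self]

namespace Matrix

variable {R : Type*} [CommRing R] {n₁ n₂ : Type*}

theorem fromRows_submatrix_one_mul_transpose_fromRows {ι : Type*} [Fintype ι] [DecidableEq ι]
    (A : Matrix n₁ ι R) (Â : Matrix n₂ ι R) (f : n₂ → ι) (hA : A * Âᵀ = 0) :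
    fromRows A ((1 : Matrix ι ι R).submatrix f id) * (fromRows A Â)ᵀ =
      fromBlocks (A * Aᵀ) 0 (A.submatrix id f)ᵀ (Â.submatrix id f)ᵀ := by
  rw [transpose_fromRows, fromRows_mul_fromCols, hA]
  congr 1 <;> exact one_submatrix_mul f (Equiv.refl ι) _

theorem det_one_add_transpose_mul_self_ne_zero {m n : Type*} [Fintype m] [Fintype n]
    [DecidableEq n] (M : Matrix m n ℤ) : (1 + Mᵀ * M).det ≠ 0 := by
  set N := M.map (Int.cast : ℤ → ℝ)
  have hmap : (1 + Mᵀ * M).map (Int.cast : ℤ → ℝ) = 1 + Nᴴ * N := by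
    ext i j
    simp [N, mul_apply, one_apply, apply_ite (Int.cast : ℤ → ℝ)]
  have hpos : 0 < ((1 + Mᵀ * M).det : ℝ) := by
    rw [← eq_intCast (Int.castRingHom ℝ), RingHom.map_det, RingHom.mapMatrix_apply,
      Int.coe_castRingHom, hmap]
    exact (PosDef.one.add_posSemidef (posSemidef_conjTranspose_mul_self N)).det_pos
  exact_mod_cast hpos.ne'

variable [Fintype n₁] [Fintype n₂] [DecidableEq n₁] [DecidableEq n₂]

theorem det_fromRows_submatrix_one (A : Matrix n₁ (n₁ ⊕ n₂) R) (σ : Equiv.Perm (n₁ ⊕ n₂)) :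
    (fromRows A ((1 : Matrix (n₁ ⊕ n₂) (n₁ ⊕ n₂) R).submatrix (σ ∘ Sum.inr) id)).det =
      Equiv.Perm.sign σ * (A.submatrix id (σ ∘ Sum.inl)).det := by
  set Q := fromRows A ((1 : Matrix (n₁ ⊕ n₂) (n₁ ⊕ n₂) R).submatrix (σ ∘ Sum.inr) id)
  have hblock : Q.submatrix id σ =
      fromBlocks (A.submatrix id (σ ∘ Sum.inl)) (A.submatrix id (σ ∘ Sum.inr)) 0 1 := by
    ext (i | i) (j | j) <;> simp [Q, one_apply, σ.injective.eq_iff]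
  have h := det_permute' σ Q
  rw [hblock, det_fromBlocks_zero₂₁, det_one, mul_one] at h
  rw [h, ← mul_assoc, ← Int.cast_mul, Int.units_coe_mul_self, Int.cast_one, one_mul]

theorem det_fromRows_submatrix_one_mul_det_fromRows (A : Matrix n₁ (n₁ ⊕ n₂) R)
    (Â : Matrix n₂ (n₁ ⊕ n₂) R) (f : n₂ → n₁ ⊕ n₂) (hA : A * Âᵀ = 0) :
    (fromRows A ((1 : Matrix (n₁ ⊕ n₂) (n₁ ⊕ n₂) R).submatrix f id)).det * (fromRows A Â).det =
      (A * Aᵀ).det * (Â.submatrix id f).det := by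
  have h := congrArg det (fromRows_submatrix_one_mul_transpose_fromRows A Â f hA)
  rwa [det_mul, det_transpose, det_fromBlocks_zero₁₂, det_transpose] at h

end Matrix

section

variable {r m : ℕ} (M : Matrix (Fin r) (Fin m) ℤ)

theorem Dmat_mul_transpose_self : Dmat M * (Dmat M)ᵀ = 1 + M * Mᵀ := by
  rw [Dmat, transpose_fromCols, fromCols_mul_fromRows, Matrix.one_mul, transpose_one]

theorem Dmat_mul_transpose_Dhat : Dmat M * (Dhat M)ᵀ = 0 := by
  rw [Dmat, Dhat, transpose_fromCols, fromCols_mul_fromRows, transpose_neg, transpose_transpose,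
    Matrix.one_mul, transpose_one, Matrix.mul_one, neg_add_cancel]

theorem det_fromRows_Dmat_Dhat : (fromRows (Dmat M) (Dhat M)).det = (1 + Mᵀ * M).det := by
  rw [Dmat, Dhat, fromRows_fromCols_eq_fromBlocks, det_fromBlocks_one₁₁, Matrix.neg_mul,
    sub_neg_eq_add, add_comm]

end

theorem stmt10_general {r m : ℕ} (M : Matrix (Fin r) (Fin m) ℤ)
    (g : Fin r → Fin r ⊕ Fin m) (gh : Fin m → Fin r ⊕ Fin m)
    (hg : Function.Injective g) (hgh : Function.Injective gh)
    (hcompl : Set.range gh = (Set.range g)ᶜ) :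
    ((Dhat M).submatrix id gh).det.natAbs = ((Dmat M).submatrix id g).det.natAbs := by
  set σ := Equiv.ofBijective _ (Function.bijective_sumElim_of_range_eq_compl hg hgh hcompl)
  set Q := fromRows (Dmat M) ((1 : Matrix (Fin r ⊕ Fin m) (Fin r ⊕ Fin m) ℤ).submatrix gh id)
  have hQX : Q.det = Equiv.Perm.sign σ * ((Dmat M).submatrix id g).det :=
    det_fromRows_submatrix_one (Dmat M) σ
  have hQY : Q.det * (1 + Mᵀ * M).det = (1 + Mᵀ * M).det * ((Dhat M).submatrix id gh).det := by
    have h := det_fromRows_submatrix_one_mul_det_fromRows (Dmat M) (Dhat M) gh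
      (Dmat_mul_transpose_Dhat M)
    rwa [det_fromRows_Dmat_Dhat, Dmat_mul_transpose_self, det_one_add_mul_comm M Mᵀ] at h
  rw [← mul_left_cancel₀ (det_one_add_transpose_mul_self_ne_zero M) ((mul_comm _ _).trans hQY),
    hQX, Int.natAbs_mul, Int.units_natAbs, one_mul]

/-- `|det(D̂|_{[n]∖B})| = |det(D|_B)|` for any basis `B` of the standard
representative matrix `D = (I_r | M)`. Here the basis is given by an injective
enumeration `g` of `B` and `ĝ` of its complement. -/
theorem stmt10 {r m : ℕ} (M : Matrix (Fin r) (Fin m) ℤ)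
    (g : Fin r → Fin r ⊕ Fin m) (gh : Fin m → Fin r ⊕ Fin m)
    (hg : Function.Injective g) (hgh : Function.Injective gh)
    (hcompl : Set.range gh = (Set.range g)ᶜ)
    (hdet : ((Dmat M).submatrix id g).det ≠ 0) :
    ((Dhat M).submatrix id gh).det.natAbs = ((Dmat M).submatrix id g).det.natAbs :=
  stmt10_general M g gh hg hgh hcompl
end

section
/- Let w ∈ R^r be a vector not contained in the R-span of any (r−1)-subset of the columns of D restricted to a basis B, and write w = Σ bᵢ c_{kᵢ} in the basis {c_{k₁},…,c_{k_r}} of columns of D indexed by B. Then a point v ∈ R^r satisfies v + εw ∈ Π•(D|_B) for all sufficiently small ε > 0 if and only if, writing v = Σ aᵢ c_{kᵢ}, one has aᵢ ∈ [0,1) when bᵢ > 0 and aᵢ ∈ (0,1] when bᵢ < 0. -/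
open Matrix MeasureTheory
open scoped ENNReal

/-!
With respect to the linearly independent columns `c i`, the point `v + ε • w` has coordinates
`a i + ε * b i`, so it lies in the parallelepiped exactly when each of them lies in `[0, 1]`, and
the problem splits into one-dimensional ones. For `b i > 0` the point `a i + ε * b i` approaches
`a i` from the right, which keeps it in `[0, 1]` for all small `ε` iff `a i ∈ [0, 1)`; the case
`b i < 0` is the mirror image under `x ↦ 1 - x`.
-/

open Filter Topology Set

lemma eventually_nhdsGT_iff_exists_forall {α : Type*} [LinearOrder α] [TopologicalSpace α]
    [OrderTopology α] [NoMaxOrder α] {a : α} {p : α → Prop} :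
    (∀ᶠ x in 𝓝[>] a, p x) ↔ ∃ b > a, ∀ x, a < x → x < b → p x := by
  simp only [Filter.Eventually, mem_nhdsGT_iff_exists_Ioo_subset, mem_Ioi, subset_def, mem_Ioo,
    mem_ofPred_eq, and_imp]

lemma eventually_add_mul_mem_Icc_iff_of_pos {a b : ℝ} (hb : 0 < b) :
    (∀ᶠ ε in 𝓝[>] 0, a + ε * b ∈ Icc (0 : ℝ) 1) ↔ a ∈ Ico (0 : ℝ) 1 := by
  have hlim : Tendsto (fun ε : ℝ => a + ε * b) (𝓝[>] 0) (𝓝 a) :=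
    ((continuous_const.add (continuous_id.mul continuous_const)).tendsto' 0 a (by simp)).mono_left
      nhdsWithin_le_nhds
  constructor
  · intro h
    obtain ⟨ε, hmem, hε⟩ := (h.and self_mem_nhdsWithin).exists
    refine ⟨ge_of_tendsto hlim (h.mono fun _ hε => hε.1), ?_⟩
    have : 0 < ε * b := mul_pos (mem_Ioi.1 hε) hb
    linarith [hmem.2]
  · rintro ⟨ha₀, ha₁⟩
    filter_upwards [self_mem_nhdsWithin, hlim.eventually_lt_const ha₁] with ε hε hlt
    exact ⟨by nlinarith [mem_Ioi.1 hε], hlt.le⟩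

lemma eventually_add_mul_mem_Icc_iff {a b : ℝ} (hb : b ≠ 0) :
    (∀ᶠ ε in 𝓝[>] 0, a + ε * b ∈ Icc (0 : ℝ) 1) ↔
      (0 < b → a ∈ Ico (0 : ℝ) 1) ∧ (b < 0 → a ∈ Ioc (0 : ℝ) 1) := by
  rcases hb.lt_or_gt with hneg | hpos
  · have hreflect : ∀ x : ℝ, x ∈ Icc (0 : ℝ) 1 ↔ 1 - x ∈ Icc (0 : ℝ) 1 := fun x => by
      simp only [mem_Icc]; constructor <;> rintro ⟨h₀, h₁⟩ <;> constructor <;> linarith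
    simp only [hreflect (a + _ * b), show ∀ ε, 1 - (a + ε * b) = 1 - a + ε * -b from
      fun ε => by ring, eventually_add_mul_mem_Icc_iff_of_pos (neg_pos.2 hneg), hneg,
      hneg.not_gt, false_implies, true_implies, true_and, mem_Ico, mem_Ioc]
    constructor <;> rintro ⟨h₀, h₁⟩ <;> constructor <;> linarith
  · simp only [eventually_add_mul_mem_Icc_iff_of_pos hpos, hpos, true_implies, hpos.not_gt,
      false_implies, and_true]

lemma LinearIndependent.sum_smul_mem_parallelepiped_iff {ι E : Type*} [Fintype ι]
    [AddCommGroup E] [Module ℝ E] {c : ι → E} (hc : LinearIndependent ℝ c) (t : ι → ℝ) :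
    ∑ i, t i • c i ∈ parallelepiped c ↔ ∀ i, t i ∈ Icc (0 : ℝ) 1 := by
  rw [mem_parallelepiped_iff]
  constructor
  · rintro ⟨s, hs, heq⟩ i
    rw [Fintype.linearIndependent_iffₛ.1 hc t s heq i]
    exact ⟨hs.1 i, hs.2 i⟩
  · exact fun ht => ⟨t, ⟨fun i => (ht i).1, fun i => (ht i).2⟩, rfl⟩

theorem LinearIndependent.eventually_add_smul_mem_parallelepiped_iff {ι E : Type*} [Fintype ι]
    [AddCommGroup E] [Module ℝ E] {c : ι → E} (hc : LinearIndependent ℝ c) {a b : ι → ℝ}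
    (hb : ∀ i, b i ≠ 0) :
    (∀ᶠ ε in 𝓝[>] (0 : ℝ), ∑ i, a i • c i + ε • ∑ i, b i • c i ∈ parallelepiped c) ↔
      ∀ i, (0 < b i → a i ∈ Ico (0 : ℝ) 1) ∧ (b i < 0 → a i ∈ Ioc (0 : ℝ) 1) := by
  have hsum : ∀ ε : ℝ, ∑ i, a i • c i + ε • ∑ i, b i • c i = ∑ i, (a i + ε * b i) • c i :=
    fun ε => by simp only [Finset.smul_sum, smul_smul, add_smul, Finset.sum_add_distrib]
  simp only [hsum, hc.sum_smul_mem_parallelepiped_iff, eventually_all,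
    fun i => eventually_add_mul_mem_Icc_iff (a := a i) (hb i)]

lemma Submodule.sum_smul_mem_span_image_erase {ι R M : Type*} [Fintype ι] [DecidableEq ι]
    [Semiring R] [AddCommMonoid M] [Module R M] (c : ι → M) {b : ι → R} {i : ι} (hi : b i = 0) :
    ∑ j, b j • c j ∈ span R (c '' ↑(Finset.univ.erase i)) := by
  rw [← Finset.sum_erase_add _ _ (Finset.mem_univ i), hi, zero_smul, add_zero]
  exact sum_mem fun j hj => smul_mem _ _ (subset_span ⟨j, hj, rfl⟩)

theorem stmt14_general (r n : ℕ) (D : Matrix (Fin r) (Fin n) ℤ)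
    (g : Fin r → Fin n)
    (hdet : (D.submatrix id g).det ≠ 0)
    (c : Fin r → Fin r → ℝ) (hc : c = fun i a => (D a (g i) : ℝ))
    (b : Fin r → ℝ) (w : Fin r → ℝ) (hw : w = ∑ i, b i • c i)
    (hspan : ∀ S : Finset (Fin r), S.card = r - 1 →
      w ∉ Submodule.span ℝ (c '' ↑S))
    (a : Fin r → ℝ) (v : Fin r → ℝ) (hv : v = ∑ i, a i • c i) :
    (∃ ε₀ > (0 : ℝ), ∀ ε : ℝ, 0 < ε → ε < ε₀ →
        v + ε • w ∈ {x : Fin r → ℝ |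
          ∃ t : Fin r → ℝ, (∀ i, 0 ≤ t i ∧ t i ≤ 1) ∧ x = ∑ i, t i • c i}) ↔
      ∀ i, (0 < b i → 0 ≤ a i ∧ a i < 1) ∧ (b i < 0 → 0 < a i ∧ a i ≤ 1) := by
  have hind : LinearIndependent ℝ c := by
    have : c = ((D.submatrix id g).map fun x => (x : ℝ)).col := by
      rw [hc]; rfl
    rw [this]
    exact Matrix.linearIndependent_cols_of_det_ne_zero (by exact_mod_cast hdet)
  have hb : ∀ i, b i ≠ 0 := fun i hi =>
    hspan _ (by simp) (hw ▸ Submodule.sum_smul_mem_span_image_erase c hi)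
  have hpar : {x : Fin r → ℝ | ∃ t : Fin r → ℝ, (∀ i, 0 ≤ t i ∧ t i ≤ 1) ∧ x = ∑ i, t i • c i} =
      parallelepiped c := by
    ext x
    simp only [mem_parallelepiped_iff, mem_ofPred_eq, mem_Icc, Pi.le_def, forall_and,
      Pi.zero_apply, Pi.one_apply]
  rw [hpar, ← eventually_nhdsGT_iff_exists_forall, hv, hw]
  exact hind.eventually_add_smul_mem_parallelepiped_iff hb

/-- with `c` the real columns of `D` indexed by a basis via `g`,
`w = Σ bᵢ cᵢ` not in the span of any `(r-1)`-subset of these columns, and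
`v = Σ aᵢ cᵢ`, one has `v + εw ∈ Π•(D|_B)` for all sufficiently small `ε > 0` iff
`aᵢ ∈ [0,1)` when `bᵢ > 0` and `aᵢ ∈ (0,1]` when `bᵢ < 0`. -/
theorem stmt14 (r n : ℕ) (D : Matrix (Fin r) (Fin n) ℤ)
    (g : Fin r → Fin n) (hg : Function.Injective g)
    (hdet : (D.submatrix id g).det ≠ 0)
    (c : Fin r → Fin r → ℝ) (hc : c = fun i a => (D a (g i) : ℝ))
    (b : Fin r → ℝ) (w : Fin r → ℝ) (hw : w = ∑ i, b i • c i)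
    (hspan : ∀ S : Finset (Fin r), S.card = r - 1 →
      w ∉ Submodule.span ℝ (c '' ↑S))
    (a : Fin r → ℝ) (v : Fin r → ℝ) (hv : v = ∑ i, a i • c i) :
    (∃ ε₀ > (0 : ℝ), ∀ ε : ℝ, 0 < ε → ε < ε₀ →
        v + ε • w ∈ {x : Fin r → ℝ |
          ∃ t : Fin r → ℝ, (∀ i, 0 ≤ t i ∧ t i ≤ 1) ∧ x = ∑ i, t i • c i}) ↔
      ∀ i, (0 < b i → 0 ≤ a i ∧ a i < 1) ∧ (b i < 0 → 0 < a i ∧ a i ≤ 1) :=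
  stmt14_general r n D g hdet c hc b w hw hspan a v hv
end
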